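/- Let f : X → ℝ be convex on a closed convex set X, bounded below on X, let x* ∈ X, and let f_x be a model at x satisfying model convexity, the lower bound f_x(y) ≤ f(y) for all y, and lower optimality f_x(y) ≥ inf_{z ∈ X} f(z) for all y. Let x⁺ = argmin_{y ∈ X} { f_x(y) + (1/(2α))‖y - x‖² }. Then ‖x⁺ - x*‖² ≤ ‖x - x*‖² + 2α ( f(x*) - inf_{z ∈ X} f(z) ). -/

import Mathlib

open Filter Topology
open scoped RealInnerProductSpace

lemma combo_norm_sq {E : Type*} [NormedAddCommGroup E] [InnerProductSpace ℝ E]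
    (a b : E) (t : ℝ) :
    ‖(1 - t) • a + t • b‖ ^ 2
      = (1 - t) * ‖a‖ ^ 2 + t * ‖b‖ ^ 2 - t * (1 - t) * ‖b - a‖ ^ 2 := by
  have h1 := norm_add_sq_real ((1 - t) • a) (t • b)
  have h2 := norm_sub_sq_real b a
  simp only [norm_smul, real_inner_smul_left, real_inner_smul_right, Real.norm_eq_abs] at h1
  have ha : |1 - t| ^ 2 = (1 - t) ^ 2 := sq_abs _
  have hb : |t| ^ 2 = t ^ 2 := sq_abs _
  have hre : ⟪b, a⟫ = ⟪a, b⟫ := real_inner_comm a b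
  rw [h1, h2, hre]
  nlinarith [sq_abs (1 - t), sq_abs t, mul_pow (|1-t|) (‖a‖) 2, mul_pow (|t|) (‖b‖) 2,
    sq_abs (1 - t), abs_nonneg t]

/-- Single-step recursion for lower-bounded (truncated) models:
`‖x⁺ - x*‖² ≤ ‖x - x*‖² + 2α (f(x*) - inf_X f)`. -/
theorem stmt4 {n : ℕ} (X : Set (EuclideanSpace ℝ (Fin n)))
    (hXcl : IsClosed X) (hXcv : Convex ℝ X)
    (f : EuclideanSpace ℝ (Fin n) → ℝ) (hf : ConvexOn ℝ X f)
    (hbdd : BddBelow (f '' X))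
    (xstar : EuclideanSpace ℝ (Fin n)) (hxstar : xstar ∈ X)
    (x : EuclideanSpace ℝ (Fin n)) (hx : x ∈ X)
    (fx : EuclideanSpace ℝ (Fin n) → ℝ)
    (hmodel_conv : ConvexOn ℝ X fx)
    (hmodel_le : ∀ y ∈ X, fx y ≤ f y)
    (hmodel_lowopt : ∀ y ∈ X, sInf (f '' X) ≤ fx y)
    (α : ℝ) (hα : 0 < α)
    (xplus : EuclideanSpace ℝ (Fin n)) (hxplus : xplus ∈ X)
    (hmin : ∀ y ∈ X,
      fx xplus + 1 / (2 * α) * ‖xplus - x‖ ^ 2 ≤ fx y + 1 / (2 * α) * ‖y - x‖ ^ 2) :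
    ‖xplus - xstar‖ ^ 2 ≤ ‖x - xstar‖ ^ 2 + 2 * α * (f xstar - sInf (f '' X)) := by
  set c : ℝ := 1 / (2 * α) with hc
  have hcpos : 0 < c := by positivity
  set A : ℝ := ‖xplus - x‖ ^ 2
  set B : ℝ := ‖xstar - x‖ ^ 2
  set D : ℝ := ‖xstar - xplus‖ ^ 2
  -- key inequality for each t ∈ (0,1]
  have key : ∀ t : ℝ, 0 < t → t ≤ 1 →
      c * (1 - t) * D ≤ fx xstar + c * B - fx xplus - c * A := by
    intro t ht0 ht1
    have h1t : (0:ℝ) ≤ 1 - t := by linarith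
    have hsum : (1 - t) + t = 1 := by ring
    have hyX : (1 - t) • xplus + t • xstar ∈ X := hXcv hxplus hxstar h1t ht0.le hsum
    have hfy : fx ((1 - t) • xplus + t • xstar) ≤ (1 - t) * fx xplus + t * fx xstar :=
      hmodel_conv.2 hxplus hxstar h1t ht0.le hsum
    have hrw : (1 - t) • xplus + t • xstar - x = (1 - t) • (xplus - x) + t • (xstar - x) := by
      module
    have hnorm : ‖(1 - t) • xplus + t • xstar - x‖ ^ 2
        = (1 - t) * A + t * B - t * (1 - t) * D := by
      rw [hrw, combo_norm_sq]
      have hd : xstar - x - (xplus - x) = xstar - xplus := by abel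
      rw [hd]
    have hm := hmin _ hyX
    rw [hnorm] at hm
    have hkey : t * (c * (1 - t) * D) ≤ t * (fx xstar + c * B - fx xplus - c * A) := by
      nlinarith [hm, hfy]
    exact le_of_mul_le_mul_left hkey ht0
  -- take t → 0⁺
  have hlim : c * D ≤ fx xstar + c * B - fx xplus - c * A := by
    have htend : Tendsto (fun t : ℝ => c * (1 - t) * D) (𝓝[>] (0:ℝ)) (𝓝 (c * D)) := by
      have : Tendsto (fun t : ℝ => c * (1 - t) * D) (𝓝 (0:ℝ)) (𝓝 (c * (1 - 0) * D)) := by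
        apply Tendsto.mul_const
        exact (tendsto_const_nhds.mul ((tendsto_const_nhds.sub tendsto_id)))
      simpa using this.mono_left nhdsWithin_le_nhds
    refine le_of_tendsto htend ?_
    filter_upwards [Ioo_mem_nhdsGT_of_mem (Set.left_mem_Ico.mpr (by norm_num : (0:ℝ) < 1))]
      with t ht
    exact key t ht.1 ht.2.le
  have h1 : fx xstar ≤ f xstar := hmodel_le _ hxstar
  have h2 : sInf (f '' X) ≤ fx xplus := hmodel_lowopt _ hxplus
  have hA : 0 ≤ A := by positivity
  have hDeq : ‖xplus - xstar‖ ^ 2 = D := by rw [norm_sub_rev]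
  have hBeq : ‖x - xstar‖ ^ 2 = B := by rw [norm_sub_rev]
  have hcα : 2 * α * c = 1 := by rw [hc]; field_simp [hα.ne']
  rw [hDeq, hBeq]
  nlinarith [mul_le_mul_of_nonneg_left hlim (by positivity : (0:ℝ) ≤ 2 * α)]
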